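/- Let c be the minimum cardinality of a set I of prime implicants of φ whose covers union to all of W_φ (a minimal prime implicant cover). Then: (a) for every k and every mixture p of k independent distributions that is possible for φ and satisfies p(w) > 0 for every possible world w, one has k ≥ c; and (b) there exists a mixture of c independent distributions that is possible for φ and assigns positive probability to every possible world. -/

import Mathlib

/-- A world is an assignment of Boolean values to `n` variables. -/
abbrev World (n : ℕ) := Fin n → Bool

/-- The independent distribution with parameters `μ`:
`p_μ(w) = ∏ i, μ i ^ (w i) * (1 - μ i) ^ (1 - w i)`. -/
def pInd {n : ℕ} (μ : Fin n → ℝ) (w : World n) : ℝ :=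
  ∏ i, if w i then μ i else 1 - μ i

/-- A partial assignment with domain `D` and values `a` covers the world `w`. -/
def covers {n : ℕ} (D : Set (Fin n)) (a : Fin n → Bool) (w : World n) : Prop :=
  ∀ i ∈ D, w i = a i

/-- The cover of a partial assignment: all worlds agreeing with it on its domain. -/
def coverSet {n : ℕ} (D : Set (Fin n)) (a : Fin n → Bool) : Set (World n) :=
  {w | covers D a w}

/-- A partial assignment is an implicant of `φ` if every world in its cover is possible. -/
def Implicant {n : ℕ} (φ : World n → Bool) (D : Set (Fin n)) (a : Fin n → Bool) : Prop :=
  ∀ w : World n, covers D a w → φ w = true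

/-- A prime implicant: an implicant whose cover is not strictly contained in the cover
of another implicant. -/
def PrimeImplicant {n : ℕ} (φ : World n → Bool) (D : Set (Fin n)) (a : Fin n → Bool) : Prop :=
  Implicant φ D a ∧ ∀ (E : Set (Fin n)) (b : Fin n → Bool),
    Implicant φ E b → ¬ (coverSet D a ⊂ coverSet E b)

/-- The deterministic coordinates of the parameter vector `μ`. -/
def detDom {n : ℕ} (μ : Fin n → ℝ) : Set (Fin n) := {i | μ i = 0 ∨ μ i = 1}

/-- The value assigned by `μ` at a deterministic coordinate. -/
noncomputable def detVal {n : ℕ} (μ : Fin n → ℝ) (i : Fin n) : Bool :=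
  if μ i = 1 then true else false

/-- A distribution over worlds: nonnegative, summing to one. -/
def IsDistribution {n : ℕ} (p : World n → ℝ) : Prop :=
  (∀ w, 0 ≤ p w) ∧ ∑ w, p w = 1

/-- A distribution is possible for `φ` if it vanishes on all impossible worlds. -/
def PossibleDist {n : ℕ} (φ : World n → Bool) (p : World n → ℝ) : Prop :=
  ∀ w, φ w = false → p w = 0

/-- The unit hypercube of parameters. -/
def unitCube (n : ℕ) : Set (Fin n → ℝ) := {μ | ∀ i, μ i ∈ Set.Icc (0:ℝ) 1}

/-- The implicant cube of a partial assignment: coordinates in `D` are fixed,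
the others range over `[0,1]`. -/
def implicantCube {n : ℕ} (D : Set (Fin n)) (a : Fin n → Bool) : Set (Fin n → ℝ) :=
  {μ | (∀ i, μ i ∈ Set.Icc (0:ℝ) 1) ∧ ∀ i ∈ D, μ i = if a i then 1 else 0}

/-- The cubical set of `φ`: the union of the prime implicant cubes. -/
def cubicalSet {n : ℕ} (φ : World n → Bool) : Set (Fin n → ℝ) :=
  ⋃ (D : Set (Fin n)) (a : Fin n → Bool) (_ : PrimeImplicant φ D a), implicantCube D a

/-- The weighted model count `Σ_{w : φ(w)=1} p_μ(w)`. -/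
noncomputable def WMC {n : ℕ} (φ : World n → Bool) (μ : Fin n → ℝ) : ℝ :=
  ∑ w : World n, if φ w then pInd μ w else 0

/-- A world regarded as a point of `[0,1]^n ⊆ ℝ^n`. -/
def worldPoint {n : ℕ} (w : World n) : Fin n → ℝ := fun i => if w i then 1 else 0

/-- An elementary interval is `{0}`, `{1}` or `[0,1]`. -/
def ElemInterval (I : Set ℝ) : Prop := I = {0} ∨ I = {1} ∨ I = Set.Icc 0 1

/-- An elementary cube is a product of elementary intervals. -/
def IsElemCube {n : ℕ} (C : Set (Fin n → ℝ)) : Prop :=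
  ∃ I : Fin n → Set ℝ, (∀ i, ElemInterval (I i)) ∧ C = {x | ∀ i, x i ∈ I i}

/-! A component `p_μ` of a mixture is positive exactly on the cover of the partial assignment
that fixes the coordinates where `μ` is `0` or `1`. In a possible mixture with full support, every
component of positive weight is therefore supported inside an implicant, hence inside a prime
implicant, and these prime implicants cover the possible worlds, so `k ≥ c`. Conversely, one
component at the centre of each implicant cube of a minimal prime implicant cover, with uniform
weights, is a possible mixture of `c` components with full support. -/

variable {n : ℕ}

lemma pInd_nonneg {μ : Fin n → ℝ} (hμ : μ ∈ unitCube n) (w : World n) : 0 ≤ pInd μ w :=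
  Finset.prod_nonneg fun i _ => by
    obtain ⟨h0, h1⟩ := hμ i
    split_ifs <;> linarith

lemma pInd_eq_zero {μ : Fin n → ℝ} {w : World n} {i : Fin n} (hi : i ∈ detDom μ)
    (hne : w i ≠ detVal μ i) : pInd μ w = 0 :=
  Finset.prod_eq_zero (Finset.mem_univ i) <| by
    rcases hi with h | h <;> cases hw : w i <;> simp_all [detVal]

lemma pInd_pos_iff {μ : Fin n → ℝ} (hμ : μ ∈ unitCube n) (w : World n) :
    0 < pInd μ w ↔ covers (detDom μ) (detVal μ) w := by
  refine ⟨fun hpos i hi => ?_, fun hcov => Finset.prod_pos fun i _ => ?_⟩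
  · by_contra hne
    exact hpos.ne' (pInd_eq_zero hi hne)
  · obtain ⟨h0, h1⟩ := hμ i
    cases hw : w i
    · rcases h1.lt_or_eq with h | h
      · simpa using h
      · have := hcov i (Or.inr h)
        simp_all [detVal]
    · rcases h0.lt_or_eq with h | h
      · simpa using h
      · have := hcov i (Or.inl h.symm)
        simp_all [detVal]

def mixture {ι : Type*} [Fintype ι] (α : ι → ℝ) (μ : ι → Fin n → ℝ) (w : World n) : ℝ :=
  ∑ m, α m * pInd (μ m) w

section Mixture

variable {ι : Type*} [Fintype ι] {α : ι → ℝ} {μ : ι → Fin n → ℝ}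

lemma mixture_nonneg (hα : ∀ m, 0 ≤ α m) (hμ : ∀ m, μ m ∈ unitCube n) (w : World n) :
    0 ≤ mixture α μ w :=
  Finset.sum_nonneg fun m _ => mul_nonneg (hα m) (pInd_nonneg (hμ m) w)

lemma mixture_pos_iff (hα : ∀ m, 0 ≤ α m) (hμ : ∀ m, μ m ∈ unitCube n) (w : World n) :
    0 < mixture α μ w ↔ ∃ m, 0 < α m ∧ covers (detDom (μ m)) (detVal (μ m)) w := by
  have hterm (m : ι) : 0 ≤ α m * pInd (μ m) w := mul_nonneg (hα m) (pInd_nonneg (hμ m) w)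
  simp only [mixture, Finset.sum_pos_iff_of_nonneg fun m _ => hterm m, Finset.mem_univ, true_and,
    ← pInd_pos_iff (hμ _)]
  exact exists_congr fun m => ⟨fun h => ⟨pos_of_mul_pos_left h (pInd_nonneg (hμ m) w),
    pos_of_mul_pos_right h (hα m)⟩, fun h => mul_pos h.1 h.2⟩

end Mixture

section Implicant

variable {φ : World n → Bool}

lemma implicant_univ {w : World n} (hw : φ w = true) : Implicant φ Set.univ w := fun _ hw' =>
  funext (fun i => hw' i (Set.mem_univ i)) ▸ hw

lemma Implicant.exists_primeImplicant_superset {D : Set (Fin n)} {a : Fin n → Bool}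
    (h : Implicant φ D a) : ∃ E b, PrimeImplicant φ E b ∧ coverSet D a ⊆ coverSet E b := by
  let S : Set (Set (Fin n) × (Fin n → Bool)) :=
    {p | Implicant φ p.1 p.2 ∧ coverSet D a ⊆ coverSet p.1 p.2}
  obtain ⟨p, ⟨hp, hDp⟩, hmax⟩ :=
    S.toFinite.exists_maximalFor (fun p => coverSet p.1 p.2) S ⟨(D, a), h, subset_rfl⟩
  refine ⟨p.1, p.2, ⟨hp, fun E b hEb hlt => hlt.not_ge ?_⟩, hDp⟩
  exact hmax (j := (E, b)) ⟨hEb, hDp.trans hlt.subset⟩ hlt.subset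

lemma exists_primeImplicant_covers {w : World n} (hw : φ w = true) :
    ∃ D a, PrimeImplicant φ D a ∧ covers D a w := by
  obtain ⟨D, a, hDa, hsub⟩ := (implicant_univ hw).exists_primeImplicant_superset
  exact ⟨D, a, hDa, hsub fun _ _ => rfl⟩

end Implicant

open Classical in
noncomputable def implicantCenter (D : Set (Fin n)) (a : Fin n → Bool) : Fin n → ℝ :=
  fun i => if i ∈ D then (if a i then 1 else 0) else 1 / 2

section ImplicantCenter

variable {D : Set (Fin n)} {a : Fin n → Bool}

lemma implicantCenter_mem_unitCube : implicantCenter D a ∈ unitCube n := fun i => by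
  unfold implicantCenter
  split_ifs <;> norm_num

lemma detDom_implicantCenter : detDom (implicantCenter D a) = D := by
  ext i
  by_cases hi : i ∈ D <;> cases a i <;> norm_num [detDom, implicantCenter, hi]

lemma detVal_implicantCenter {i : Fin n} (hi : i ∈ D) : detVal (implicantCenter D a) i = a i := by
  cases h : a i <;> simp [detVal, implicantCenter, hi, h]

lemma covers_detDom_implicantCenter_iff {w : World n} :
    covers (detDom (implicantCenter D a)) (detVal (implicantCenter D a)) w ↔ covers D a w := by
  rw [detDom_implicantCenter]
  exact forall₂_congr fun i hi => by rw [detVal_implicantCenter hi]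

end ImplicantCenter

def IsPrimeImplicantCover (φ : World n → Bool) {ι : Type*} (D : ι → Set (Fin n))
    (a : ι → Fin n → Bool) : Prop :=
  (∀ j, PrimeImplicant φ (D j) (a j)) ∧ ∀ w : World n, φ w = true → ∃ j, covers (D j) (a j) w

section PrimeImplicantCover

variable {φ : World n → Bool} {ι : Type*}

lemma IsPrimeImplicantCover.comp_equiv {κ : Type*} {D : ι → Set (Fin n)} {a : ι → Fin n → Bool}
    (h : IsPrimeImplicantCover φ D a) (e : κ ≃ ι) : IsPrimeImplicantCover φ (D ∘ e) (a ∘ e) :=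
  ⟨fun j => h.1 (e j), fun w hw => (h.2 w hw).imp' e.symm fun j hj => by simpa using hj⟩

lemma exists_primeImplicantCover_fin (φ : World n → Bool) :
    ∃ (k : ℕ) (D : Fin k → Set (Fin n)) (a : Fin k → Fin n → Bool),
      IsPrimeImplicantCover φ D a := by
  choose D a hprime hcov using fun w : {w : World n // φ w = true} =>
    exists_primeImplicant_covers w.2
  have h : IsPrimeImplicantCover φ D a := ⟨hprime, fun w hw => ⟨⟨w, hw⟩, hcov ⟨w, hw⟩⟩⟩
  exact ⟨_, _, _, h.comp_equiv (Fintype.equivFin _).symm⟩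

variable [Fintype ι]

lemma exists_primeImplicantCover_of_mixture (hφ : ∃ w, φ w = true) {α : ι → ℝ}
    {μ : ι → Fin n → ℝ} (hα : ∀ m, 0 ≤ α m) (hμ : ∀ m, μ m ∈ unitCube n)
    (hposs : PossibleDist φ (mixture α μ)) (hsupp : ∀ w, φ w = true → 0 < mixture α μ w) :
    ∃ (D : ι → Set (Fin n)) (a : ι → Fin n → Bool), IsPrimeImplicantCover φ D a := by
  obtain ⟨w₀, hw₀⟩ := hφ
  have himp (m : ι) (hm : 0 < α m) : Implicant φ (detDom (μ m)) (detVal (μ m)) := by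
    intro w hw
    by_contra hfw
    have hpos := (mixture_pos_iff hα hμ w).2 ⟨m, hm, hw⟩
    exact hpos.ne' (hposs w (by simpa using hfw))
  have hprime (m : ι) : ∃ E b, PrimeImplicant φ E b ∧
      (0 < α m → coverSet (detDom (μ m)) (detVal (μ m)) ⊆ coverSet E b) := by
    by_cases hm : 0 < α m
    · obtain ⟨E, b, hEb, hsub⟩ := (himp m hm).exists_primeImplicant_superset
      exact ⟨E, b, hEb, fun _ => hsub⟩
    · obtain ⟨E, b, hEb, -⟩ := exists_primeImplicant_covers hw₀
      exact ⟨E, b, hEb, fun h => absurd h hm⟩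
  choose D a hDa hsub using hprime
  refine ⟨D, a, hDa, fun w hw => ?_⟩
  obtain ⟨m, hm, hcov⟩ := (mixture_pos_iff hα hμ w).1 (hsupp w hw)
  exact ⟨m, hsub m hm hcov⟩

lemma IsPrimeImplicantCover.exists_mixture [Nonempty ι] {D : ι → Set (Fin n)}
    {a : ι → Fin n → Bool} (h : IsPrimeImplicantCover φ D a) :
    ∃ (α : ι → ℝ) (μ : ι → Fin n → ℝ), (∀ m, 0 ≤ α m) ∧ ∑ m, α m = 1 ∧
      (∀ m, μ m ∈ unitCube n) ∧ PossibleDist φ (mixture α μ) ∧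
      ∀ w, φ w = true → 0 < mixture α μ w := by
  let α : ι → ℝ := fun _ => (Fintype.card ι : ℝ)⁻¹
  let μ : ι → Fin n → ℝ := fun m => implicantCenter (D m) (a m)
  have hα (m : ι) : 0 < α m := by positivity
  have hμ (m : ι) : μ m ∈ unitCube n := implicantCenter_mem_unitCube
  have hpos (w : World n) : 0 < mixture α μ w ↔ ∃ m, covers (D m) (a m) w := by
    simp only [mixture_pos_iff (fun m => (hα m).le) hμ, hα, true_and, μ,
      covers_detDom_implicantCenter_iff]
  refine ⟨α, μ, fun m => (hα m).le, ?_, hμ, fun w hw => ?_, fun w hw => (hpos w).2 (h.2 w hw)⟩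
  · simp [α, Finset.card_univ]
  · refine le_antisymm (not_lt.1 fun hw' => ?_) (mixture_nonneg (fun m => (hα m).le) hμ w)
    obtain ⟨m, hcov⟩ := (hpos w).1 hw'
    simp [(h.1 m).1 w hcov] at hw

end PrimeImplicantCover

theorem stmt17_general (n : ℕ) (φ : World n → Bool) (hφ : ∃ w, φ w = true)
    (c : ℕ)
    (hc : c = sInf {k : ℕ | ∃ (D : Fin k → Set (Fin n)) (a : Fin k → Fin n → Bool),
      (∀ j, PrimeImplicant φ (D j) (a j)) ∧
      ∀ w : World n, φ w = true → ∃ j, covers (D j) (a j) w}) :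
    -- (a) any possible mixture with full support on the possible worlds has at least `c`
    --     components
    (∀ (k : ℕ) (α : Fin k → ℝ) (μ : Fin k → Fin n → ℝ),
      (∀ m, 0 ≤ α m) → (∑ m, α m = 1) → (∀ m, μ m ∈ unitCube n) →
      PossibleDist φ (fun w => ∑ m, α m * pInd (μ m) w) →
      (∀ w : World n, φ w = true → 0 < ∑ m, α m * pInd (μ m) w) → c ≤ k) ∧
    -- (b) `c` components suffice
    (∃ (α : Fin c → ℝ) (μ : Fin c → Fin n → ℝ),
      (∀ m, 0 ≤ α m) ∧ (∑ m, α m = 1) ∧ (∀ m, μ m ∈ unitCube n) ∧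
      PossibleDist φ (fun w => ∑ m, α m * pInd (μ m) w) ∧
      ∀ w : World n, φ w = true → 0 < ∑ m, α m * pInd (μ m) w) := by
  have hne : {k : ℕ | ∃ (D : Fin k → Set (Fin n)) (a : Fin k → Fin n → Bool),
      IsPrimeImplicantCover φ D a}.Nonempty := exists_primeImplicantCover_fin φ
  refine ⟨fun k α μ hα _ hμ hposs hsupp => hc ▸ Nat.sInf_le
    (exists_primeImplicantCover_of_mixture hφ hα hμ hposs hsupp), ?_⟩
  obtain ⟨D, a, hcover⟩ : ∃ (D : Fin c → Set (Fin n)) (a : Fin c → Fin n → Bool),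
      IsPrimeImplicantCover φ D a := hc ▸ Nat.sInf_mem hne
  obtain ⟨w, hw⟩ := hφ
  have : Nonempty (Fin c) := (hcover.2 w hw).nonempty
  exact hcover.exists_mixture

/-- the minimal number of mixture components needed for a possible mixture
assigning positive probability to all possible worlds is the size `c` of a minimal prime
implicant cover of `φ`. -/
theorem stmt17 (n : ℕ) (hn : 1 ≤ n) (φ : World n → Bool) (hφ : ∃ w, φ w = true)
    (c : ℕ)
    (hc : c = sInf {k : ℕ | ∃ (D : Fin k → Set (Fin n)) (a : Fin k → Fin n → Bool),
      (∀ j, PrimeImplicant φ (D j) (a j)) ∧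
      ∀ w : World n, φ w = true → ∃ j, covers (D j) (a j) w}) :
    -- (a) any possible mixture with full support on the possible worlds has at least `c`
    --     components
    (∀ (k : ℕ) (α : Fin k → ℝ) (μ : Fin k → Fin n → ℝ),
      (∀ m, 0 ≤ α m) → (∑ m, α m = 1) → (∀ m, μ m ∈ unitCube n) →
      PossibleDist φ (fun w => ∑ m, α m * pInd (μ m) w) →
      (∀ w : World n, φ w = true → 0 < ∑ m, α m * pInd (μ m) w) → c ≤ k) ∧
    -- (b) `c` components suffice
    (∃ (α : Fin c → ℝ) (μ : Fin c → Fin n → ℝ),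
      (∀ m, 0 ≤ α m) ∧ (∑ m, α m = 1) ∧ (∀ m, μ m ∈ unitCube n) ∧
      PossibleDist φ (fun w => ∑ m, α m * pInd (μ m) w) ∧
      ∀ w : World n, φ w = true → 0 < ∑ m, α m * pInd (μ m) w) :=
  stmt17_general n φ hφ c hc
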